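/- Let G be a finite group containing an RDS R with forbidden subgroup U, and let 𝒢 ≤ Aut(G)_R ⋉ G satisfy: |𝒢| = |G|, 1 × X := (1 × G) ∩ 𝒢 is normal in both 1 × G and 𝒢, and 𝒢 acts transitively on right cosets of X in G via (Xh)^(φ,g) = X h^φ g. Then 𝒰 := {(φ,g) ∈ 𝒢 : g ∈ U} is a subgroup of 𝒢 with |𝒰| = |U|, and ℛ := {(φ,r) ∈ 𝒢 : r ∈ R} is an RDS in 𝒢 with the same parameters as R, with forbidden subgroup 𝒰. -/

import Mathlib

/-- The "right holomorph": pairs (φ, g) with multiplication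
(φ₁,g₁)(φ₂,g₂) = (φ₁φ₂, g₁^{φ₂} g₂), composition of automorphisms left-to-right. -/
@[ext] structure RHol (G : Type*) [Group G] where
  aut : MulAut G
  el : G

namespace RHol

variable {G : Type*} [Group G]

instance : Mul (RHol G) := ⟨fun a b => ⟨a.aut.trans b.aut, b.aut a.el * b.el⟩⟩
instance : One (RHol G) := ⟨⟨MulEquiv.refl G, 1⟩⟩
instance : Inv (RHol G) := ⟨fun a => ⟨a.aut.symm, a.aut.symm a.el⁻¹⟩⟩

@[simp] lemma mul_aut (a b : RHol G) : (a * b).aut = a.aut.trans b.aut := rfl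
@[simp] lemma mul_el (a b : RHol G) : (a * b).el = b.aut a.el * b.el := rfl
@[simp] lemma one_aut : (1 : RHol G).aut = MulEquiv.refl G := rfl
@[simp] lemma one_el : (1 : RHol G).el = 1 := rfl
@[simp] lemma inv_aut (a : RHol G) : a⁻¹.aut = a.aut.symm := rfl
@[simp] lemma inv_el (a : RHol G) : a⁻¹.el = a.aut.symm a.el⁻¹ := rfl

instance : Group (RHol G) where
  mul_assoc a b c := by
    refine RHol.ext ?_ ?_
    · exact MulEquiv.ext fun x => rfl
    · show c.aut (b.aut a.el * b.el) * c.el = (b.aut.trans c.aut) a.el * (c.aut b.el * c.el)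
      simp [mul_assoc]
  one_mul a := by
    refine RHol.ext ?_ ?_
    · exact MulEquiv.ext fun x => rfl
    · show a.aut 1 * a.el = a.el
      simp
  mul_one a := by
    refine RHol.ext ?_ ?_
    · exact MulEquiv.ext fun x => rfl
    · show (MulEquiv.refl G) a.el * 1 = a.el
      simp
  inv_mul_cancel a := by
    refine RHol.ext ?_ ?_
    · exact MulEquiv.ext fun x => by simp
    · show a.aut (a.aut.symm a.el⁻¹) * a.el = 1
      simp

end RHol

section Defs

variable {G : Type*} [Group G]

/-- Number of ways to write `g = d₁ * d₂⁻¹` with `d₁, d₂ ∈ D`. -/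
noncomputable def diffCount (D : Set G) (g : G) : ℕ :=
  Nat.card {p : D × D // (p.1 : G) * (p.2 : G)⁻¹ = g}

def IsRDS (R : Set G) (U : Subgroup G) (m u k l : ℕ) : Prop :=
  Nat.card G = m * u ∧ Nat.card U = u ∧ Nat.card R = k ∧
    (∀ g : G, g ∉ U → diffCount R g = l) ∧
    (∀ g : G, g ∈ U → g ≠ 1 → diffCount R g = 0)

end Defs

/-! The transitive action `X h ↦ X h^φ g` of `𝒢` on the `|G : X|` right cosets of `X` has
stabiliser `{x ∈ 𝒢 : x.el ∈ X}` of order `|𝒢| / |G : X| = |X|`; it contains the `|X|` elements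
`(1, h)`, `h ∈ X`, so it consists of them only. Hence `(φ, 1) ∈ 𝒢` forces `φ = 1`, and
`x ↦ x.el` is a bijection `𝒢 → G`. The automorphism parts of `𝒢` fix `R`, hence also `U`
(as `λ > 0`, `U` consists of `1` and the elements that are not differences of `R`), and the
bijection `x ↦ x.aut⁻¹ x.el` matches the representations of `z` as a difference in `ℛ` with
those of `z.el` in `R`. -/

open Function QuotientGroup

section DiffCount

variable {G : Type*} [Group G]

lemma diffCount_eq_card (D : Set G) (g : G) :
    diffCount D g = Nat.card {x : G // x ∈ D ∧ g * x ∈ D} := by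
  refine Nat.card_congr
    { toFun := fun p => ⟨p.1.2, p.1.2.2, ?_⟩
      invFun := fun x => ⟨(⟨g * x, x.2.2⟩, ⟨x, x.2.1⟩), by simp⟩
      left_inv := fun p => ?_
      right_inv := fun x => rfl }
  · obtain ⟨⟨a, b⟩, rfl⟩ := p
    simp
  · obtain ⟨⟨a, b⟩, rfl⟩ := p
    simp

lemma diffCount_eq_of_equiv {H : Type*} [Group H] {D : Set G} {E : Set H} {g : G} {h : H}
    (e : G ≃ H) (hD : ∀ x, x ∈ D ↔ e x ∈ E) (hgD : ∀ x, g * x ∈ D ↔ h * e x ∈ E) :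
    diffCount D g = diffCount E h := by
  rw [diffCount_eq_card, diffCount_eq_card]
  exact Nat.card_congr (e.subtypeEquiv fun x => and_congr (hD x) (hgD x))

lemma diffCount_map {D : Set G} (φ : G ≃* G) (hφ : ∀ x, φ x ∈ D ↔ x ∈ D) (g : G) :
    diffCount D (φ g) = diffCount D g :=
  diffCount_eq_of_equiv φ.symm.toEquiv (fun x => by simpa using hφ (φ.symm x))
    fun x => by simpa using hφ (g * φ.symm x)

end DiffCount

namespace IsRDS

variable {G : Type*} [Group G] {R : Set G} {U : Subgroup G} {m u k l : ℕ}

lemma mem_iff (hl : 0 < l) (hR : IsRDS R U m u k l) (g : G) :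
    g ∈ U ↔ g = 1 ∨ diffCount R g = 0 := by
  refine ⟨fun hg => or_iff_not_imp_left.2 (hR.2.2.2.2 g hg), ?_⟩
  rintro (rfl | h0)
  · exact U.one_mem
  · by_contra hg
    rw [hR.2.2.2.1 g hg] at h0
    omega

lemma map_mem_iff (hl : 0 < l) (hR : IsRDS R U m u k l) (φ : G ≃* G)
    (hφ : ∀ x, φ x ∈ R ↔ x ∈ R) (g : G) : φ g ∈ U ↔ g ∈ U := by
  rw [hR.mem_iff hl, hR.mem_iff hl, diffCount_map φ hφ, map_eq_one_iff φ φ.injective]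

end IsRDS

lemma Subgroup.index_eq_index_of_rightRel_iff {A B : Type*} [Group A] [Group B]
    {S : Subgroup A} {T : Subgroup B} (f : A → B)
    (hf : ∀ x y, f y * (f x)⁻¹ ∈ T ↔ y * x⁻¹ ∈ S) (hsurj : ∀ b, ∃ a, f a * b⁻¹ ∈ T) :
    S.index = T.index := by
  rw [Subgroup.index, Subgroup.index,
    ← Nat.card_congr (quotientRightRelEquivQuotientLeftRel S),
    ← Nat.card_congr (quotientRightRelEquivQuotientLeftRel T)]
  refine Nat.card_congr (Equiv.ofBijective
    (Quotient.map f fun x y h => rightRel_apply.2 ((hf x y).2 (rightRel_apply.1 h))) ⟨?_, ?_⟩)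
  · rintro ⟨x⟩ ⟨y⟩ h
    exact Quotient.sound (rightRel_apply.2 ((hf x y).1 (rightRel_apply.1 (Quotient.exact h))))
  · rintro ⟨b⟩
    obtain ⟨a, ha⟩ := hsurj b
    exact ⟨⟦a⟧, Quotient.sound (rightRel_apply.2 (by simpa using inv_mem ha))⟩

namespace RHol

variable {G : Type*} [Group G]

instance [Finite G] : Finite (RHol G) :=
  Finite.of_injective (fun x : RHol G => (x.aut, x.el)) fun _ _ h =>
    RHol.ext (Prod.ext_iff.1 h).1 (Prod.ext_iff.1 h).2

lemma mul_inv_el (a b : RHol G) : (a * b⁻¹).el = b.aut.symm (a.el * b.el⁻¹) := by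
  simp

lemma inv_el_inv (a : RHol G) : a⁻¹.el⁻¹ = a.aut.symm a.el := by
  simp

lemma conj_el (a : RHol G) (g : G) : (a⁻¹ * ⟨1, g⟩ * a).el = a.el⁻¹ * a.aut g * a.el := by
  simp [mul_assoc]

variable {𝒢 : Subgroup (RHol G)}

lemma aut_mem_iff {X : Subgroup G} (hX : ∀ x ∈ 𝒢, ∀ g ∈ X, RHol.aut x g ∈ X) {x : RHol G}
    (hx : x ∈ 𝒢) (g : G) : x.aut g ∈ X ↔ g ∈ X :=
  ⟨fun h => by simpa using hX x⁻¹ (inv_mem hx) _ h, hX x hx g⟩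

variable (𝒢) in
def elComap (U : Subgroup G) (hU : ∀ x ∈ 𝒢, ∀ g ∈ U, RHol.aut x g ∈ U) : Subgroup 𝒢 where
  carrier := {x | (x : RHol G).el ∈ U}
  one_mem' := U.one_mem
  mul_mem' {_ b} ha hb := U.mul_mem (hU b b.2 _ ha) hb
  inv_mem' {a} ha := hU _ (inv_mem a.2) _ (U.inv_mem ha)

lemma injective_el (h𝒢 : ∀ x ∈ 𝒢, RHol.el x = 1 → RHol.aut x = 1) :
    Injective fun x : 𝒢 => (x : RHol G).el := by
  intro a b (hab : (a : RHol G).el = (b : RHol G).el)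
  have hel : ((a * b⁻¹ : 𝒢) : RHol G).el = 1 := by
    simp only [Subgroup.coe_mul, Subgroup.coe_inv, mul_inv_el]
    rw [hab, mul_inv_cancel, map_one]
  have haut := h𝒢 _ (a * b⁻¹).2 hel
  rw [← mul_inv_eq_one]
  exact Subtype.ext (RHol.ext haut hel)

lemma aut_mem_of_conj_el_mem {X : Subgroup G} (hX : X.Normal)
    (h𝒢 : ∀ x ∈ 𝒢, ∀ g ∈ X, (x⁻¹ * ⟨1, g⟩ * x : RHol G).el ∈ X) :
    ∀ x ∈ 𝒢, ∀ g ∈ X, RHol.aut x g ∈ X := by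
  intro x hx g hg
  have := hX.conj_mem _ (h𝒢 x hx g hg) x.el
  rwa [conj_el, mul_assoc, mul_assoc, mul_inv_cancel, mul_one, mul_inv_cancel_left] at this

lemma card_elComap [Finite G] {X : Subgroup G} (hX : ∀ x ∈ 𝒢, ∀ g ∈ X, RHol.aut x g ∈ X)
    (hcard : Nat.card 𝒢 = Nat.card G) (htrans : ∀ g : G, ∃ x ∈ 𝒢, RHol.el x * g⁻¹ ∈ X) :
    Nat.card (elComap 𝒢 X hX) = Nat.card X := by
  have hindex : (elComap 𝒢 X hX).index = X.index := by
    refine Subgroup.index_eq_index_of_rightRel_iff (fun x : 𝒢 => (x : RHol G).el)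
      (fun x y => ?_) fun g => ?_
    · change _ ↔ ((y * x⁻¹ : 𝒢) : RHol G).el ∈ X
      rw [Subgroup.coe_mul, Subgroup.coe_inv, mul_inv_el, ← inv_aut,
        aut_mem_iff hX (inv_mem x.2)]
    · obtain ⟨x, hx, hxg⟩ := htrans g
      exact ⟨⟨x, hx⟩, hxg⟩
  have h𝒢 := (elComap 𝒢 X hX).card_mul_index
  rw [hcard, hindex, ← X.card_mul_index] at h𝒢
  exact Nat.eq_of_mul_eq_mul_right (Nat.pos_of_ne_zero X.index_ne_zero_of_finite) h𝒢

lemma aut_eq_one_of_el_mem [Finite G] {X : Subgroup G}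
    (hX𝒢 : ∀ g : G, g ∈ X ↔ (⟨1, g⟩ : RHol G) ∈ 𝒢) (hX : ∀ x ∈ 𝒢, ∀ g ∈ X, RHol.aut x g ∈ X)
    (hcard : Nat.card (elComap 𝒢 X hX) = Nat.card X) {x : RHol G} (hx : x ∈ 𝒢)
    (hxX : x.el ∈ X) : x.aut = 1 := by
  let ι : X → elComap 𝒢 X hX := fun g => ⟨⟨⟨1, g⟩, (hX𝒢 g).1 g.2⟩, g.2⟩
  have hι : Injective ι := fun g h hgh => Subtype.ext (congrArg (fun y => y.1.1.el) hgh)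
  obtain ⟨_, hg⟩ :=
    ((Nat.bijective_iff_injective_and_card ι).2 ⟨hι, hcard.symm⟩).2 ⟨⟨x, hx⟩, hxX⟩
  exact congrArg (fun y => y.1.1.aut) hg.symm

theorem bijective_el [Finite G] {X : Subgroup G}
    (hX𝒢 : ∀ g : G, g ∈ X ↔ (⟨1, g⟩ : RHol G) ∈ 𝒢) (hX : ∀ x ∈ 𝒢, ∀ g ∈ X, RHol.aut x g ∈ X)
    (hcard : Nat.card 𝒢 = Nat.card G) (htrans : ∀ g : G, ∃ x ∈ 𝒢, RHol.el x * g⁻¹ ∈ X) :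
    Bijective fun x : 𝒢 => (x : RHol G).el :=
  (Nat.bijective_iff_injective_and_card _).2
    ⟨injective_el fun _ hx h1 => aut_eq_one_of_el_mem hX𝒢 hX (card_elComap hX hcard htrans) hx
      (h1 ▸ X.one_mem), hcard⟩

variable {R : Set G} (hR : ∀ x ∈ 𝒢, ∀ g, RHol.aut x g ∈ R ↔ g ∈ R)
  (hbij : Bijective fun x : 𝒢 => (x : RHol G).el)
include hR hbij

/-- The bijection is `x ↦ x.aut⁻¹ x.el = (x⁻¹.el)⁻¹`. -/
lemma diffCount_elPreimage (z : 𝒢) :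
    diffCount {x : 𝒢 | (x : RHol G).el ∈ R} z = diffCount R (z : RHol G).el := by
  refine diffCount_eq_of_equiv ((Equiv.inv 𝒢).trans ((Equiv.ofBijective _ hbij).trans
    (Equiv.inv G))) (fun x => ?_) fun x => ?_
  · change (x : RHol G).el ∈ R ↔ ((x⁻¹ : 𝒢) : RHol G).el⁻¹ ∈ R
    rw [Subgroup.coe_inv, inv_el_inv, ← inv_aut, hR _ (inv_mem x.2)]
  · change ((z * x : 𝒢) : RHol G).el ∈ R ↔ (z : RHol G).el * ((x⁻¹ : 𝒢) : RHol G).el⁻¹ ∈ R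
    rw [Subgroup.coe_mul, mul_el, Subgroup.coe_inv, inv_el_inv]
    conv_rhs => rw [← hR _ x.2, map_mul, MulEquiv.apply_symm_apply]

theorem isRDS_elPreimage {U : Subgroup G} {m u k l : ℕ} (hRDS : IsRDS R U m u k l)
    (hU : ∀ x ∈ 𝒢, ∀ g ∈ U, RHol.aut x g ∈ U) :
    IsRDS {x : 𝒢 | (x : RHol G).el ∈ R} (elComap 𝒢 U hU) m u k l := by
  obtain ⟨hmu, hu, hk, hout, hin⟩ := hRDS
  let e := Equiv.ofBijective _ hbij
  refine ⟨(Nat.card_congr e).trans hmu,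
    (Nat.card_congr (e.subtypeEquiv fun _ => Iff.rfl)).trans hu,
    (Nat.card_congr (e.subtypeEquiv fun _ => Iff.rfl)).trans hk, fun z hz => ?_,
    fun z hz hz1 => ?_⟩
  · rw [diffCount_elPreimage hR hbij]
    exact hout _ hz
  · rw [diffCount_elPreimage hR hbij]
    exact hin _ hz fun h => hz1 (hbij.1 h)

end RHol

/-- Combinatorial transfer for relative difference sets (Theorem 1.2). -/
theorem combinatorial_transfer_rds {G : Type*} [Group G] [Finite G]
    (R : Set G) (U : Subgroup G) (m u k l : ℕ) (hl : 0 < l)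
    (hR : IsRDS R U m u k l)
    (𝒢 : Subgroup (RHol G)) (X : Subgroup G)
    (h𝒢le : ∀ x ∈ 𝒢, (RHol.aut x) '' R = R)
    (hcard : Nat.card 𝒢 = Nat.card G)
    (hX : ∀ g : G, g ∈ X ↔ (⟨1, g⟩ : RHol G) ∈ 𝒢)
    (hXnormalG : X.Normal)
    (hXnormal𝒢 : ∀ x ∈ 𝒢, ∀ g ∈ X, ((x⁻¹ * ⟨1, g⟩ * x : RHol G)).el ∈ X)
    (htrans : ∀ h₁ h₂ : G, ∃ x ∈ 𝒢, (RHol.aut x) h₁ * (RHol.el x) * h₂⁻¹ ∈ X) :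
    ∃ 𝒰 : Subgroup 𝒢, ((𝒰 : Set 𝒢) = {x : 𝒢 | (x : RHol G).el ∈ U}) ∧
      Nat.card 𝒰 = Nat.card U ∧
      IsRDS {x : 𝒢 | (x : RHol G).el ∈ R} 𝒰 m u k l := by
  have hXinv := RHol.aut_mem_of_conj_el_mem hXnormalG hXnormal𝒢
  have hbij := RHol.bijective_el hX hXinv hcard fun g => by simpa using htrans 1 g
  have hRinv : ∀ x ∈ 𝒢, ∀ g, RHol.aut x g ∈ R ↔ g ∈ R := fun x hx g => by
    conv_lhs => rw [← h𝒢le x hx]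
    exact (RHol.aut x).injective.mem_set_image
  have hUinv : ∀ x ∈ 𝒢, ∀ g ∈ U, RHol.aut x g ∈ U :=
    fun x hx g => (hR.map_mem_iff hl _ (hRinv x hx) g).2
  have h𝒰 := RHol.isRDS_elPreimage hRinv hbij hR hUinv
  exact ⟨RHol.elComap 𝒢 U hUinv, rfl, h𝒰.2.1.trans hR.2.1.symm, h𝒰⟩
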